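/- Let R be a Noetherian local ring and p ∈ Spec(R). The R-module R/p is simple torsion-free if and only if p is a maximal element of Ass(R). -/

import Mathlib

/-- A module is torsion-free if no nonzero element is annihilated by a
non-zerodivisor of `R`. -/
def IsTorsionFreeMod (R M : Type) [CommRing R] [AddCommGroup M] [Module R M] : Prop :=
  ∀ (r : R) (x : M), r ∈ nonZeroDivisors R → r • x = 0 → x = 0

/-- A module is torsion if every element is annihilated by some non-zerodivisor. -/
def IsTorsionMod (R M : Type) [CommRing R] [AddCommGroup M] [Module R M] : Prop :=
  ∀ x : M, ∃ r ∈ nonZeroDivisors R, r • x = 0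

/-- `M` is simple torsion-free if `M ≠ 0` is torsion-free and no proper quotient
`M/U` with `U ≠ 0` is torsion-free. -/
def SimpleTorsionFree (R M : Type) [CommRing R] [AddCommGroup M] [Module R M] : Prop :=
  (∃ x : M, x ≠ 0) ∧ IsTorsionFreeMod R M ∧
    ∀ U : Submodule R M, U ≠ ⊥ → U ≠ ⊤ → ¬ IsTorsionFreeMod R (M ⧸ U)


/-!
Over a Noetherian ring the zero divisors are the union of the finitely many associated primes,
so by prime avoidance an ideal `I` consists of zero divisors iff it lies in an associated prime.
For a proper ideal `I`, torsion-freeness of `R/I` forces `I` to consist of zero divisors, and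
for a prime `I` the converse holds as well. Since the nonzero proper quotients of `R/p` are the
modules `R/I` with `p < I < R`, the module `R/p` is simple torsion-free exactly when `p` lies in
an associated prime but no proper ideal strictly above `p` does, i.e. when `p` is a maximal
associated prime.
-/

open nonZeroDivisors

variable {R : Type} [CommRing R]

theorem IsTorsionFreeMod.of_linearEquiv {M N : Type} [AddCommGroup M] [Module R M]
    [AddCommGroup N] [Module R N] (e : M ≃ₗ[R] N) (h : IsTorsionFreeMod R M) :
    IsTorsionFreeMod R N := by
  intro r x hr hx
  simpa using congrArg e (h r (e.symm x) hr (by simpa using congrArg e.symm hx))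

namespace Ideal

theorem disjoint_nonZeroDivisors_of_isTorsionFreeMod_quotient {I : Ideal R} (hI : I ≠ ⊤)
    (h : IsTorsionFreeMod R (R ⧸ I)) : Disjoint (I : Set R) R⁰ := by
  refine Set.disjoint_left.mpr fun r hrI hr => hI ?_
  rw [eq_top_iff_one, ← Submodule.Quotient.mk_eq_zero]
  refine h r _ hr ?_
  rwa [← Submodule.Quotient.mk_smul, Submodule.Quotient.mk_eq_zero, smul_eq_mul, mul_one]

theorem IsPrime.isTorsionFreeMod_quotient_iff {p : Ideal R} (hp : p.IsPrime) :
    IsTorsionFreeMod R (R ⧸ p) ↔ Disjoint (p : Set R) R⁰ := by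
  refine ⟨disjoint_nonZeroDivisors_of_isTorsionFreeMod_quotient hp.ne_top,
    fun h r x hr hx => ?_⟩
  obtain ⟨y, rfl⟩ := Submodule.Quotient.mk_surjective p x
  rw [← Submodule.Quotient.mk_smul, Submodule.Quotient.mk_eq_zero, smul_eq_mul] at hx
  rw [Submodule.Quotient.mk_eq_zero]
  exact (hp.mem_or_mem hx).resolve_left fun hrp => Set.disjoint_left.mp h hrp hr

variable [IsNoetherianRing R]

theorem exists_le_isAssociatedPrime_of_disjoint_nonZeroDivisors {I : Ideal R}
    (h : Disjoint (I : Set R) R⁰) : ∃ P, IsAssociatedPrime P R ∧ I ≤ P :=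
  (I.subset_union_prime_finite (associatedPrimes.finite R R) (f := id) 0 0
    fun _ hP _ _ => hP.isPrime).mp <|
      biUnion_associatedPrimes_eq_compl_nonZeroDivisors R ▸ h.subset_compl_right

end Ideal

theorem IsAssociatedPrime.disjoint_nonZeroDivisors [IsNoetherianRing R] {q : Ideal R}
    (hq : IsAssociatedPrime q R) : Disjoint (q : Set R) R⁰ :=
  Set.subset_compl_iff_disjoint_right.mp <|
    biUnion_associatedPrimes_eq_compl_nonZeroDivisors R ▸
      Set.subset_biUnion_of_mem (u := fun P : Ideal R => (P : Set R))
        (show q ∈ associatedPrimes R R from hq)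

theorem isTorsionFreeMod_quotient_map_mkQ_iff {p I : Ideal R} (hpI : p ≤ I) :
    IsTorsionFreeMod R ((R ⧸ p) ⧸ Submodule.map p.mkQ I) ↔ IsTorsionFreeMod R (R ⧸ I) :=
  ⟨.of_linearEquiv (Submodule.quotientQuotientEquivQuotient p I hpI),
    .of_linearEquiv (Submodule.quotientQuotientEquivQuotient p I hpI).symm⟩

theorem simpleTorsionFree_quotient_iff {p : Ideal R} (hp : p ≠ ⊤) :
    SimpleTorsionFree R (R ⧸ p) ↔
      IsTorsionFreeMod R (R ⧸ p) ∧
        ∀ I : Ideal R, p < I → I ≠ ⊤ → ¬ IsTorsionFreeMod R (R ⧸ I) := by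
  have : Nontrivial (R ⧸ p) := Ideal.Quotient.nontrivial_iff.mpr hp
  have hnontriv : ∃ x : R ⧸ p, x ≠ 0 := exists_ne 0
  simp only [SimpleTorsionFree, hnontriv, true_and, and_congr_right_iff]
  intro _
  constructor
  · intro h I hpI hI
    rw [← isTorsionFreeMod_quotient_map_mkQ_iff hpI.le]
    refine h _ ?_ ?_
    · rw [Ne, ← le_bot_iff, Submodule.map_le_iff_le_comap, Submodule.comap_bot,
        Submodule.ker_mkQ]
      exact hpI.not_ge
    · rwa [Ne, Submodule.map_mkQ_eq_top, sup_eq_right.mpr hpI.le]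
  · intro h U hU₀ hU
    set I : Ideal R := Submodule.comap p.mkQ U
    have hUI : Submodule.map p.mkQ I = U :=
      Submodule.map_comap_eq_of_surjective (Submodule.mkQ_surjective p) U
    have hpI : p < I := by
      refine (Submodule.le_comap_mkQ p U).lt_of_ne fun hpI : p = I => hU₀ ?_
      rw [← hUI, ← hpI, Submodule.mkQ_map_self]
    have hI : I ≠ ⊤ := fun hI => hU <| by
      rw [← hUI, hI, Submodule.map_top, Submodule.range_mkQ]
    rw [← hUI, isTorsionFreeMod_quotient_map_mkQ_iff hpI.le]
    exact h I hpI hI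

theorem stmt11_general (R : Type) [CommRing R] [IsNoetherianRing R]
    (p : Ideal R) [p.IsPrime] :
    SimpleTorsionFree R (R ⧸ p) ↔
      (IsAssociatedPrime p R ∧
        ∀ q : Ideal R, IsAssociatedPrime q R → p ≤ q → q = p) := by
  rw [simpleTorsionFree_quotient_iff Ideal.IsPrime.ne_top',
    Ideal.IsPrime.isTorsionFreeMod_quotient_iff ‹_›]
  constructor
  · rintro ⟨hp, hmin⟩
    have hmax : ∀ q : Ideal R, IsAssociatedPrime q R → p ≤ q → q = p := by
      refine fun q hq hpq => by_contra fun hqp => hmin q (hpq.lt_of_ne' hqp) hq.isPrime.ne_top ?_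
      exact hq.isPrime.isTorsionFreeMod_quotient_iff.mpr hq.disjoint_nonZeroDivisors
    obtain ⟨P, hP, hpP⟩ := Ideal.exists_le_isAssociatedPrime_of_disjoint_nonZeroDivisors hp
    exact ⟨hmax P hP hpP ▸ hP, hmax⟩
  · rintro ⟨hp, hmax⟩
    refine ⟨hp.disjoint_nonZeroDivisors, fun I hpI hI hTF => ?_⟩
    obtain ⟨P, hP, hIP⟩ := Ideal.exists_le_isAssociatedPrime_of_disjoint_nonZeroDivisors
      (Ideal.disjoint_nonZeroDivisors_of_isTorsionFreeMod_quotient hI hTF)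
    exact (hpI.trans_le hIP).ne' (hmax P hP (hpI.le.trans hIP))

/-- Over a Noetherian local ring `R`, the module `R/p` is simple torsion-free iff
`p` is a maximal element of `Ass(R)`. -/
theorem stmt11 (R : Type) [CommRing R] [IsNoetherianRing R] [IsLocalRing R]
    (p : Ideal R) [p.IsPrime] :
    SimpleTorsionFree R (R ⧸ p) ↔
      (IsAssociatedPrime p R ∧
        ∀ q : Ideal R, IsAssociatedPrime q R → p ≤ q → q = p) :=
  stmt11_general R p
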